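/- Let r = p ∈ ℕ, μ > 0, and a_0,…,a_p ≥ 0. If a_p/p! ≤ 1/(2μ^p), then setting ε = max_{0≤j≤p−1} μ (4 a_j / j!)^{1/p} (assuming ε ≤ 1/2) implies Σ_{j=0}^{p} (a_j/j!) ε^j ≤ (ε/μ)^p. -/
import Mathlib


open scoped BigOperators

/-- Algebraic core of the exact `p = r` case (TaSIL appendix): if the leading coefficient
satisfies `a_p/p! ≤ 1/(2μ^p)` and `ε = max_{0 ≤ j ≤ p−1} μ (4 a_j / j!)^{1/p} ≤ 1/2`, then
`Σ_{j=0}^p (a_j/j!) ε^j ≤ (ε/μ)^p`. -/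
theorem stmt7 (p : ℕ) (hp : 1 ≤ p) (a : ℕ → ℝ) (μ ε : ℝ)
    (ha : ∀ j, 0 ≤ a j) (hμ : 0 < μ)
    (hlead : a p / (p.factorial : ℝ) ≤ 1 / (2 * μ ^ p))
    (hε : ε = (Finset.range p).sup' (Finset.nonempty_range_iff.mpr (by omega))
        fun j => μ * (4 * a j / (j.factorial : ℝ)) ^ ((1 : ℝ) / p))
    (hhalf : ε ≤ 1 / 2) :
    ∑ j ∈ Finset.range (p + 1), a j / (j.factorial : ℝ) * ε ^ j ≤ (ε / μ) ^ p := by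
  have hp0 : (p : ℝ) ≠ 0 := Nat.cast_ne_zero.mpr (by omega)
  have hε0 : 0 ≤ ε := by
    have h0 : (0 : ℕ) ∈ Finset.range p := Finset.mem_range.mpr (by omega)
    have := Finset.le_sup' (f := fun j => μ * (4 * a j / (j.factorial : ℝ)) ^ ((1 : ℝ) / p)) h0
    rw [← hε] at this
    refine le_trans ?_ this
    have h4 : (0:ℝ) ≤ 4 * a 0 / ((0:ℕ).factorial : ℝ) :=
      div_nonneg (by linarith [ha 0]) (Nat.cast_nonneg _)
    have := Real.rpow_nonneg h4 ((1:ℝ)/p)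
    positivity
  -- key bound for j < p
  have key : ∀ j ∈ Finset.range p, a j / (j.factorial : ℝ) ≤ (ε / μ) ^ p / 4 := by
    intro j hj
    have hle : μ * (4 * a j / (j.factorial : ℝ)) ^ ((1 : ℝ) / p) ≤ ε := by
      have := Finset.le_sup' (f := fun j => μ * (4 * a j / (j.factorial : ℝ)) ^ ((1 : ℝ) / p)) hj
      rw [← hε] at this; exact this
    have hx0 : (0:ℝ) ≤ 4 * a j / (j.factorial : ℝ) :=
      div_nonneg (by linarith [ha j]) (Nat.cast_nonneg _)
    have hle2 : (4 * a j / (j.factorial : ℝ)) ^ ((1 : ℝ) / p) ≤ ε / μ :=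
      (le_div_iff₀' hμ).mpr hle
    have hpow : ((4 * a j / (j.factorial : ℝ)) ^ ((1 : ℝ) / p)) ^ p ≤ (ε / μ) ^ p :=
      pow_le_pow_left₀ (Real.rpow_nonneg hx0 _) hle2 p
    have heq : ((4 * a j / (j.factorial : ℝ)) ^ ((1 : ℝ) / p)) ^ p
        = 4 * a j / (j.factorial : ℝ) := by
      rw [← Real.rpow_natCast ((4 * a j / (j.factorial : ℝ)) ^ ((1 : ℝ) / p)) p,
        ← Real.rpow_mul hx0, one_div, inv_mul_cancel₀ hp0, Real.rpow_one]
    rw [heq, mul_div_assoc] at hpow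
    linarith
  have hgeom : ∑ j ∈ Finset.range p, ε ^ j ≤ 2 := by
    calc ∑ j ∈ Finset.range p, ε ^ j ≤ ∑ j ∈ Finset.range p, (1/2:ℝ) ^ j := by
          refine Finset.sum_le_sum fun j _ => pow_le_pow_left₀ hε0 hhalf j
      _ ≤ 2 := by
          rw [geom_sum_eq (by norm_num)]
          have : (0:ℝ) ≤ (1/2:ℝ)^p := by positivity
          rw [div_le_iff_of_neg (by norm_num)]
          linarith
  have hεμ0 : 0 ≤ (ε / μ) ^ p := by positivity
  rw [Finset.sum_range_succ]
  have h1 : ∑ j ∈ Finset.range p, a j / (j.factorial : ℝ) * ε ^ j ≤ (ε / μ) ^ p / 2 := by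
    calc ∑ j ∈ Finset.range p, a j / (j.factorial : ℝ) * ε ^ j
        ≤ ∑ j ∈ Finset.range p, (ε / μ) ^ p / 4 * ε ^ j := by
          refine Finset.sum_le_sum fun j hj =>
            mul_le_mul_of_nonneg_right (key j hj) (by positivity)
      _ = (ε / μ) ^ p / 4 * ∑ j ∈ Finset.range p, ε ^ j := by
          rw [Finset.mul_sum]
      _ ≤ (ε / μ) ^ p / 4 * 2 := by
          exact mul_le_mul_of_nonneg_left hgeom (by positivity)
      _ = (ε / μ) ^ p / 2 := by ring
  have h2 : a p / (p.factorial : ℝ) * ε ^ p ≤ (ε / μ) ^ p / 2 := by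
    have := mul_le_mul_of_nonneg_right hlead (pow_nonneg hε0 p)
    calc a p / (p.factorial : ℝ) * ε ^ p ≤ 1 / (2 * μ ^ p) * ε ^ p := this
      _ = (ε / μ) ^ p / 2 := by
          rw [div_pow]; ring
  linarith
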